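/- arXiv:2207.00105 — 8 statements merged into one kernel-verified Lean document; each statement's English description precedes it below -/
import Mathlib

section
/- Let F be a field, S an F-vector space, and (U, V) a tiling of S such that U is projective. Suppose u_1, …, u_N are nonzero vectors of S, no two of which are proportional (non-collinear), such that U = ⋃_{i=1}^N F·u_i. Define the linear map h : F^N → S by h(c) = Σ_{i=1}^N c_i u_i and set C = h^{-1}(V). Then C is a 1-perfect code in F^N, i.e., (B_1, C) is a tiling of F^N. -/
/-- `(U, V)` is a tiling of the ambient space `S`: every element of `S` is uniquely
represented as the sum of an element of `U` and an element of `V`. -/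
def IsTiling {S : Type*} [AddCommGroup S] (U V : Set S) : Prop :=
  ∀ s : S, ∃! p : S × S, p.1 ∈ U ∧ p.2 ∈ V ∧ p.1 + p.2 = s

/-- `U` is projective: `F·U = U`, i.e. `U` is closed under scalar multiplication. -/
def IsProjective (F : Type*) {S : Type*} [Field F] [AddCommGroup S] [Module F S]
    (U : Set S) : Prop :=
  ∀ (a : F) ⦃u : S⦄, u ∈ U → a • u ∈ U

/-- The radius-1 Hamming ball centered at 0: vectors with at most one nonzero coordinate. -/
def hammingBall1 (F : Type*) [Zero F] (N : ℕ) : Set (Fin N → F) :=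
  {c | {j | c j ≠ 0}.Subsingleton}

theorem statement0 {F : Type*} [Field F] {S : Type*} [AddCommGroup S] [Module F S]
    (U V : Set S) (hT : IsTiling U V) (hproj : IsProjective F U)
    {N : ℕ} (u : Fin N → S) (hu0 : ∀ i, u i ≠ 0)
    (hcol : ∀ i j : Fin N, i ≠ j → ∀ a : F, u i ≠ a • u j)
    (hU : U = ⋃ i, Set.range (fun a : F => a • u i))
    (C : Set (Fin N → F)) (hC : C = {c | (∑ i, c i • u i) ∈ V}) :
    IsTiling (hammingBall1 F N) C := by
  classical
  have h0U : (0 : S) ∈ U := by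
    obtain ⟨p, ⟨hp1, -, -⟩, -⟩ := hT 0
    simpa using hproj 0 hp1
  have hsum : ∀ e : Fin N → F, e ∈ hammingBall1 F N → ∀ j, e j ≠ 0 →
      (∑ i, e i • u i) = e j • u j := by
    intro e he j hj
    refine Finset.sum_eq_single j (fun i _ hij => ?_) (by simp)
    by_cases hi : e i = 0
    · simp [hi]
    · exact absurd (he hi hj) hij
  have hzero : ∀ e ∈ hammingBall1 F N, (∑ i, e i • u i) = 0 → e = 0 := by
    intro e he hs
    funext k
    by_contra hk
    rw [hsum e he k hk] at hs
    rcases smul_eq_zero.1 hs with h | h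
    · exact hk h
    · exact hu0 k h
  have hball_mem : ∀ e ∈ hammingBall1 F N, (∑ i, e i • u i) ∈ U := by
    intro e he
    by_cases h : ∃ j, e j ≠ 0
    · obtain ⟨j, hj⟩ := h
      rw [hsum e he j hj, hU]
      exact Set.mem_iUnion.2 ⟨j, ⟨e j, rfl⟩⟩
    · push_neg at h
      have : (∑ i, e i • u i) = 0 := by simp [h]
      rw [this]; exact h0U
  have hinj : ∀ e ∈ hammingBall1 F N, ∀ e' ∈ hammingBall1 F N,
      (∑ i, e i • u i) = (∑ i, e' i • u i) → e = e' := by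
    intro e he e' he' hEq
    by_cases h : ∃ j, e j ≠ 0
    · obtain ⟨j, hj⟩ := h
      by_cases h' : ∃ j', e' j' ≠ 0
      · obtain ⟨j', hj'⟩ := h'
        rw [hsum e he j hj, hsum e' he' j' hj'] at hEq
        have hjj : j = j' := by
          by_contra hne
          exact hcol j j' hne ((e j)⁻¹ * e' j')
            (by rw [mul_smul, ← hEq, inv_smul_smul₀ hj])
        subst hjj
        have hval : e j = e' j := by
          by_contra hne
          have : (e j - e' j) • u j = 0 := by rw [sub_smul, hEq, sub_self]
          rcases smul_eq_zero.1 this with h | h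
          · exact hne (sub_eq_zero.1 h)
          · exact hu0 j h
        funext k
        by_cases hk : k = j
        · rw [hk, hval]
        · have h1 : e k = 0 := by
            by_contra hek; exact hk (he hek hj)
          have h2 : e' k = 0 := by
            by_contra hek; exact hk (he' hek hj')
          rw [h1, h2]
      · push_neg at h'
        have : (∑ i, e' i • u i) = 0 := by simp [h']
        rw [this] at hEq
        rw [hzero e he hEq]
        funext k; exact (h' k).symm
    · push_neg at h
      have h0 : (∑ i, e i • u i) = 0 := by simp [h]
      rw [h0] at hEq
      rw [hzero e' he' hEq.symm]
      funext k; exact h k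
  intro s
  obtain ⟨⟨w, v⟩, ⟨hw, hv, hwv⟩, huniq⟩ := hT (∑ i, s i • u i)
  obtain ⟨j, a, hwa⟩ : ∃ j a, (a : F) • u j = w := by
    rw [hU] at hw
    obtain ⟨t, ⟨j, rfl⟩, ⟨a, ha⟩⟩ := hw
    exact ⟨j, a, ha⟩
  set e : Fin N → F := fun k => if k = j then a else 0 with he_def
  have heB : e ∈ hammingBall1 F N := by
    intro x hx y hy
    simp only [he_def, Set.mem_setOf_eq, ne_eq, ite_eq_right_iff, not_forall] at hx hy
    rw [hx.1, hy.1]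
  have hse : (∑ i, e i • u i) = w := by
    rw [← hwa, he_def]
    simp [ite_smul]
  have hlin : ∀ x y : Fin N → F,
      (∑ i, (x i + y i) • u i) = (∑ i, x i • u i) + (∑ i, y i • u i) := by
    intro x y
    rw [← Finset.sum_add_distrib]
    exact Finset.sum_congr rfl fun i _ => add_smul _ _ _
  have hce : (∑ i, (s - e) i • u i) = v := by
    have := hlin e (s - e)
    simp only [Pi.sub_apply, add_sub_cancel] at this
    rw [hse] at this
    have := this.symm
    rw [← hwv] at this
    exact add_left_cancel this
  refine ⟨(e, s - e), ⟨heB, by rw [hC]; exact Set.mem_setOf_eq ▸ hce ▸ hv, by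
    funext k; simp⟩, ?_⟩
  rintro ⟨e', c'⟩ ⟨he', hc', hsum'⟩
  have hc'v : (∑ i, c' i • u i) ∈ V := by rw [hC] at hc'; exact hc'
  have he'U : (∑ i, e' i • u i) ∈ U := hball_mem e' he'
  have htot : (∑ i, e' i • u i) + (∑ i, c' i • u i) = ∑ i, s i • u i := by
    rw [← hlin]
    exact Finset.sum_congr rfl fun i _ => by rw [← hsum']; simp
  have hpair := huniq (∑ i, e' i • u i, ∑ i, c' i • u i) ⟨he'U, hc'v, htot⟩
  have hEqw : (∑ i, e' i • u i) = w := congrArg Prod.fst hpair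
  have hee : e' = e := hinj e' he' e heB (by rw [hEqw, hse])
  have : c' = s - e := by
    rw [← hsum', hee]; funext k; simp
  rw [hee, this]
end

section
/- Let F be a field, S an F-vector space, and (U, V) a tiling of S such that U is projective. Suppose u_1, …, u_N are nonzero vectors of S, no two of which are proportional, such that U = ⋃_{i=1}^N F·u_i. Define the linear map h : F^N → S by h(c) = Σ_{i=1}^N c_i u_i and set C = h^{-1}(V). Let W = span(U) (the linear span), r = dim W, and V_U = V ∩ W. Then rank(C) = rank(V_U) + N − r, i.e., the dimension of the affine span of C in F^N equals the dimension of the affine span of V_U plus N − r. -/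
/-- The rank of a subset of a vector space: the dimension of its affine span. -/
noncomputable def setRank (F : Type*) {S : Type*} [Field F] [AddCommGroup S] [Module F S]
    (X : Set S) : ℕ :=
  Module.finrank F (affineSpan F X).direction

/-!
With `h c = ∑ i, c i • u i` we have `range h = span U = W` and `C = h ⁻¹' V = h ⁻¹' V_U`.
For a nonempty set `X` inside the range of a linear map `f`, the vector span of `f ⁻¹' X` is the
preimage of the vector span of `X`; it contains `ker f`, so by rank–nullity
`rank (f ⁻¹' X) = rank X + dim ker f`, and `dim ker h = N - r`. The tiling makes `V_U` nonempty:
writing `0 = x + y` with `x ∈ U`, `y ∈ V` puts `y = -x` in `V ∩ W`.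
-/

theorem vectorSpan_preimage_eq_comap {R M S : Type*} [Ring R] [AddCommGroup M] [Module R M]
    [AddCommGroup S] [Module R S] (f : M →ₗ[R] S) {X : Set S} (hne : X.Nonempty)
    (hX : X ⊆ LinearMap.range f) : vectorSpan R (f ⁻¹' X) = (vectorSpan R X).comap f := by
  obtain ⟨_, hx⟩ := hne
  obtain ⟨c, rfl⟩ := hX hx
  have htranslate : (· -ᵥ c) '' (f ⁻¹' X) = f ⁻¹' ((· -ᵥ f c) '' X) := by
    ext d
    constructor
    · rintro ⟨e, he, rfl⟩
      exact ⟨f e, he, by simp [vsub_eq_sub]⟩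
    · rintro ⟨y, hy, hyd : y - f c = f d⟩
      refine ⟨d + c, ?_, by simp [vsub_eq_sub]⟩
      rw [Set.mem_preimage, map_add, ← hyd, sub_add_cancel]
      exact hy
  rw [vectorSpan_eq_span_vsub_set_right R (show c ∈ f ⁻¹' X from hx),
    vectorSpan_eq_span_vsub_set_right R hx, htranslate, Submodule.span_preimage_eq]
  · exact ⟨0, f c, hx, vsub_self _⟩
  · rintro _ ⟨y, hy, rfl⟩
    obtain ⟨a, rfl⟩ := hX hy
    exact ⟨a - c, map_sub f a c⟩

theorem finrank_comap_of_le_range {F M S : Type*} [DivisionRing F] [AddCommGroup M] [Module F M]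
    [AddCommGroup S] [Module F S] [FiniteDimensional F M] (f : M →ₗ[F] S)
    {K : Submodule F S} (hK : K ≤ LinearMap.range f) :
    Module.finrank F (K.comap f) = Module.finrank F K + Module.finrank F (LinearMap.ker f) := by
  set g := f.domRestrict (K.comap f)
  have hrange : LinearMap.range g = K := by
    rw [LinearMap.range_domRestrict, Submodule.map_comap_eq, inf_eq_right.mpr hK]
  have hker : LinearMap.ker g ≃ₗ[F] LinearMap.ker f :=
    (LinearMap.ker_domRestrict _ f) ▸ Submodule.comapSubtypeEquivOfLe (LinearMap.ker_le_comap f)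
  rw [← g.finrank_range_add_finrank_ker, hrange, hker.finrank_eq]

theorem setRank_preimage {F M S : Type*} [Field F] [AddCommGroup M] [Module F M]
    [AddCommGroup S] [Module F S] [FiniteDimensional F M] (f : M →ₗ[F] S) {X : Set S}
    (hne : (X ∩ LinearMap.range f).Nonempty) :
    setRank F (f ⁻¹' X) =
      setRank F (X ∩ LinearMap.range f) + Module.finrank F (LinearMap.ker f) := by
  have hpre : f ⁻¹' X = f ⁻¹' (X ∩ LinearMap.range f) := by
    ext c; simp
  have hle : vectorSpan F (X ∩ LinearMap.range f) ≤ LinearMap.range f := by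
    rw [vectorSpan_def, Submodule.span_le]
    rintro _ ⟨a, ⟨-, ha⟩, b, ⟨-, hb⟩, rfl⟩
    exact sub_mem ha hb
  unfold setRank
  rw [direction_affineSpan, direction_affineSpan, hpre,
    vectorSpan_preimage_eq_comap f hne Set.inter_subset_right, finrank_comap_of_le_range f hle]

theorem IsTiling.inter_span_nonempty {R S : Type*} [Ring R] [AddCommGroup S] [Module R S]
    {U V : Set S} (hT : IsTiling U V) : (V ∩ Submodule.span R U).Nonempty := by
  obtain ⟨⟨x, y⟩, ⟨hx, hy, hxy : x + y = 0⟩, -⟩ := hT 0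
  refine ⟨y, hy, ?_⟩
  rw [eq_neg_of_add_eq_zero_right hxy]
  exact neg_mem (Submodule.subset_span hx)

theorem span_iUnion_range_smul {R S ι : Type*} [Semiring R] [AddCommMonoid S] [Module R S]
    (u : ι → S) :
    Submodule.span R (⋃ i, Set.range (fun a : R => a • u i)) = Submodule.span R (Set.range u) := by
  apply le_antisymm
  · rw [Submodule.span_le]
    rintro _ ⟨_, ⟨i, rfl⟩, a, rfl⟩
    exact Submodule.smul_mem _ a (Submodule.subset_span ⟨i, rfl⟩)
  · rw [Submodule.span_le]
    rintro _ ⟨i, rfl⟩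
    exact Submodule.subset_span (Set.mem_iUnion.mpr ⟨i, 1, one_smul R (u i)⟩)

theorem statement1_general {F : Type*} [Field F] {S : Type*} [AddCommGroup S] [Module F S]
    (U V : Set S) (hT : IsTiling U V)
    {N : ℕ} (u : Fin N → S)
    (hU : U = ⋃ i, Set.range (fun a : F => a • u i))
    (C : Set (Fin N → F)) (hC : C = {c | (∑ i, c i • u i) ∈ V})
    (W : Submodule F S) (hW : W = Submodule.span F U)
    (r : ℕ) (hr : r = Module.finrank F W)
    (VU : Set S) (hVU : VU = V ∩ (W : Set S)) :
    setRank F C = setRank F VU + (N - r) := by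
  set h := Fintype.linearCombination F u
  have hrange : LinearMap.range h = W := by
    rw [Fintype.range_linearCombination, hW, hU, span_iUnion_range_smul]
  have hCV : C = h ⁻¹' V := by
    rw [hC]; rfl
  have hker : Module.finrank F (LinearMap.ker h) = N - r := by
    have := h.finrank_range_add_finrank_ker
    rw [hrange, ← hr, Module.finrank_fin_fun] at this
    omega
  have hne : (V ∩ LinearMap.range h).Nonempty := by
    rw [hrange, hW]; exact hT.inter_span_nonempty
  rw [hCV, setRank_preimage h hne, hker, hVU, hrange]

theorem statement1 {F : Type*} [Field F] {S : Type*} [AddCommGroup S] [Module F S]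
    (U V : Set S) (hT : IsTiling U V) (hproj : IsProjective F U)
    {N : ℕ} (u : Fin N → S) (hu0 : ∀ i, u i ≠ 0)
    (hcol : ∀ i j : Fin N, i ≠ j → ∀ a : F, u i ≠ a • u j)
    (hU : U = ⋃ i, Set.range (fun a : F => a • u i))
    (C : Set (Fin N → F)) (hC : C = {c | (∑ i, c i • u i) ∈ V})
    (W : Submodule F S) (hW : W = Submodule.span F U)
    (r : ℕ) (hr : r = Module.finrank F W)
    (VU : Set S) (hVU : VU = V ∩ (W : Set S)) :
    setRank F C = setRank F VU + (N - r) :=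
  statement1_general U V hT u hU C hC W hW r hr VU hVU
end

section
/- Let F be a field, S an F-vector space, and (U, V) a tiling of S. Let W = span(U) be the linear span of U. Then (U, V ∩ W) is a tiling of W. -/
/-- `(U, V)` is a tiling of the subset `W` of the ambient space: every element of `W` is
uniquely represented as the sum of an element of `U` and an element of `V`. -/
def IsTilingIn {S : Type*} [AddCommGroup S] (W U V : Set S) : Prop :=
  ∀ s ∈ W, ∃! p : S × S, p.1 ∈ U ∧ p.2 ∈ V ∧ p.1 + p.2 = s

theorem statement3 {F : Type*} [Field F] {S : Type*} [AddCommGroup S] [Module F S]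
    (U V : Set S) (hT : IsTiling U V)
    (W : Submodule F S) (hW : W = Submodule.span F U) :
    IsTilingIn (W : Set S) U (V ∩ (W : Set S)) := by
  intro s hs
  obtain ⟨p, ⟨hu, hv, hsum⟩, huniq⟩ := hT s
  have huW : p.1 ∈ W := hW ▸ Submodule.subset_span hu
  have hvW : p.2 ∈ W := by
    have : p.2 = s - p.1 := by rw [← hsum]; abel
    rw [this]; exact W.sub_mem hs huW
  exact ⟨p, ⟨hu, ⟨hv, hvW⟩, hsum⟩, fun q ⟨h1, h2, h3⟩ => huniq q ⟨h1, h2.1, h3⟩⟩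
end

section
/- Let F be a field, S an F-vector space, and let (𝒰, 𝒱) be a factorization of the projective space PG(S). Let W = Σ_{u ∈ 𝒰} u be the subspace of S spanned by the points of 𝒰, and suppose 𝒰 is not full-rank, i.e., W ≠ S. Then (𝒰, 𝒱_W) is a factorization of PG(W), where 𝒱_W = {v ∈ 𝒱 : v ≤ W}. -/
/-- A point of the projective space `PG(S)`: a one-dimensional subspace of `S`. -/
def IsProjPoint (F : Type*) {S : Type*} [Field F] [AddCommGroup S] [Module F S]
    (p : Submodule F S) : Prop :=
  ∃ v : S, v ≠ 0 ∧ p = Submodule.span F {v}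

/-- `(𝒰, 𝒱)` is a factorization of the projective space `PG(W)` of the subspace `W ≤ S`
(whose points are the one-dimensional subspaces of `S` contained in `W`): `𝒰` and `𝒱` are
disjoint, and every point `p ≤ W` outside `𝒰 ∪ 𝒱` lies on the line through a unique pair of
points `u ∈ 𝒰`, `v ∈ 𝒱` (i.e. `p ≤ u ⊔ v`). Taking `W = ⊤` gives factorizations of `PG(S)`. -/
def IsFactorizationIn (F : Type*) {S : Type*} [Field F] [AddCommGroup S] [Module F S]
    (W : Submodule F S) (𝒰 𝒱 : Set (Submodule F S)) : Prop :=
  Disjoint 𝒰 𝒱 ∧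
    ∀ p : Submodule F S, IsProjPoint F p → p ≤ W → p ∉ 𝒰 → p ∉ 𝒱 →
      ∃! uv : Submodule F S × Submodule F S,
        uv.1 ∈ 𝒰 ∧ uv.2 ∈ 𝒱 ∧ p ≤ uv.1 ⊔ uv.2

theorem statement11 {F : Type*} [Field F] {S : Type*} [AddCommGroup S] [Module F S]
    (𝒰 𝒱 : Set (Submodule F S))
    (h𝒰 : ∀ p ∈ 𝒰, IsProjPoint F p) (h𝒱 : ∀ p ∈ 𝒱, IsProjPoint F p)
    (hfac : IsFactorizationIn F ⊤ 𝒰 𝒱)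
    (W : Submodule F S) (hW : W = sSup 𝒰) (hnf : W ≠ ⊤) :
    IsFactorizationIn F W 𝒰 {v ∈ 𝒱 | v ≤ W} := by
  obtain ⟨hdisj, hfac⟩ := hfac
  constructor
  · exact hdisj.mono_right (Set.sep_subset _ _)
  · intro p hp hpW hpU hpV
    have hpV' : p ∉ 𝒱 := fun h => hpV ⟨h, hpW⟩
    obtain ⟨⟨u, v⟩, ⟨hu, hv, hle⟩, huniq⟩ := hfac p hp le_top hpU hpV'
    have huW : u ≤ W := hW ▸ le_sSup hu
    have hvW : v ≤ W := by
      obtain ⟨x, hx0, hpx⟩ := hp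
      obtain ⟨a, ha0, hua⟩ := h𝒰 u hu
      obtain ⟨b, hb0, hvb⟩ := h𝒱 v hv
      have hxp : x ∈ p := hpx ▸ Submodule.mem_span_singleton_self x
      have hxuv : x ∈ u ⊔ v := hle hxp
      rw [Submodule.mem_sup] at hxuv
      obtain ⟨y, hy, z, hz, hyz⟩ := hxuv
      rw [hua, Submodule.mem_span_singleton] at hy
      rw [hvb, Submodule.mem_span_singleton] at hz
      obtain ⟨c, rfl⟩ := hy
      obtain ⟨d, rfl⟩ := hz
      by_cases hd : d = 0
      · exfalso
        apply hpU
        subst hd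
        rw [zero_smul, add_zero] at hyz
        have hc : c ≠ 0 := by rintro rfl; rw [zero_smul] at hyz; exact hx0 hyz.symm
        have : p = u := by
          rw [hpx, hua, ← hyz, Submodule.span_singleton_smul_eq (IsUnit.mk0 c hc) a]
        rwa [this]
      · have hxW : x ∈ W := hpW hxp
        have haW : a ∈ W := huW (hua ▸ Submodule.mem_span_singleton_self a)
        have hbW : b ∈ W := by
          have hb : b = d⁻¹ • (x - c • a) := by
            rw [← hyz, add_sub_cancel_left, smul_smul, inv_mul_cancel₀ hd, one_smul]
          rw [hb]
          exact W.smul_mem _ (W.sub_mem hxW (W.smul_mem _ haW))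
        rw [hvb, Submodule.span_singleton_le_iff_mem]
        exact hbW
    refine ⟨(u, v), ⟨hu, ⟨hv, hvW⟩, hle⟩, ?_⟩
    rintro ⟨u', v'⟩ ⟨h1, h2, h3⟩
    exact huniq (u', v') ⟨h1, h2.1, h3⟩
end

section
/- Let F be a field, S an F-vector space, and let (𝒰, 𝒱) be a factorization of the projective space PG(S). Let p = ⟨x⟩ be a point of PG(S) that is a period of 𝒰, and let π : S → S/⟨x⟩ be the quotient map. For a set 𝒞 of points, let 𝒞/p = {π(c) : c ∈ 𝒞, c ≠ p} (each such image π(c) is a one-dimensional subspace of S/⟨x⟩). Then (𝒰/p, 𝒱/p) is a factorization of PG(S/⟨x⟩). -/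
/-- `(𝒰, 𝒱)` is a factorization of the projective space `PG(S)`: `𝒰` and `𝒱` are disjoint,
and every point `p` of `PG(S)` outside `𝒰 ∪ 𝒱` lies on the line through a unique pair of
points `u ∈ 𝒰`, `v ∈ 𝒱` (i.e. `p ≤ u ⊔ v`). -/
def IsFactorization (F : Type*) {S : Type*} [Field F] [AddCommGroup S] [Module F S]
    (𝒰 𝒱 : Set (Submodule F S)) : Prop :=
  Disjoint 𝒰 𝒱 ∧
    ∀ p : Submodule F S, IsProjPoint F p → p ∉ 𝒰 → p ∉ 𝒱 →
      ∃! uv : Submodule F S × Submodule F S,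
        uv.1 ∈ 𝒰 ∧ uv.2 ∈ 𝒱 ∧ p ≤ uv.1 ⊔ uv.2

/-- The point `p` is a period of the point set `𝒰`: `𝒰` is a union of lines through `p`,
i.e. there is a family `𝓛` of two-dimensional subspaces, each containing `p`, such that
`𝒰` is exactly the set of points contained in their union. -/
def IsPeriodPoint (F : Type*) {S : Type*} [Field F] [AddCommGroup S] [Module F S]
    (p : Submodule F S) (𝒰 : Set (Submodule F S)) : Prop :=
  ∃ 𝓛 : Set (Submodule F S),
    (∀ L ∈ 𝓛, Module.finrank F L = 2 ∧ p ≤ L) ∧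
    𝒰 = {q | IsProjPoint F q ∧ ∃ L ∈ 𝓛, q ≤ L}

/-- The projection `𝒞 / p` of a set `𝒞` of points of `PG(S)` along the point `p = ⟨x⟩`:
the images under the quotient map `S → S ⧸ ⟨x⟩` of the points of `𝒞` other than `p`. -/
def projectSet (F : Type*) {S : Type*} [Field F] [AddCommGroup S] [Module F S]
    (x : S) (𝒞 : Set (Submodule F S)) :
    Set (Submodule F (S ⧸ Submodule.span F {x})) :=
  (fun c => Submodule.map (Submodule.span F {x}).mkQ c) '' (𝒞 \ {Submodule.span F {x}})

section helpers
variable {F : Type*} [Field F] {S : Type*} [AddCommGroup S] [Module F S]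

lemma span_singleton_eq_of_mem {a b : S} (hb : b ≠ 0) (h : b ∈ Submodule.span F {a}) :
    Submodule.span F {b} = Submodule.span F {a} := by
  obtain ⟨c, rfl⟩ := Submodule.mem_span_singleton.mp h
  have hc : c ≠ 0 := fun h0 => hb (by simp [h0])
  exact Submodule.span_singleton_smul_eq (IsUnit.mk0 c hc) a

lemma proj_eq_of_le {A B : Submodule F S} (hA : IsProjPoint F A) (hB : IsProjPoint F B)
    (h : A ≤ B) : A = B := by
  obtain ⟨a, ha, rfl⟩ := hA
  obtain ⟨b, hb, rfl⟩ := hB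
  exact span_singleton_eq_of_mem ha (h (Submodule.mem_span_singleton_self a))

lemma proj_fd {A : Submodule F S} (hA : IsProjPoint F A) : FiniteDimensional F A := by
  obtain ⟨a, ha, rfl⟩ := hA; infer_instance

lemma proj_finrank {A : Submodule F S} (hA : IsProjPoint F A) : Module.finrank F A = 1 := by
  obtain ⟨a, ha, rfl⟩ := hA; exact finrank_span_singleton ha

lemma proj_inf_eq_bot {A B : Submodule F S} (hA : IsProjPoint F A) (hB : IsProjPoint F B)
    (hne : A ≠ B) : A ⊓ B = ⊥ := by
  by_contra h
  obtain ⟨z, hz, hz0⟩ := (Submodule.ne_bot_iff _).mp h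
  obtain ⟨a, ha, rfl⟩ := hA
  obtain ⟨b, hb, rfl⟩ := hB
  exact hne ((span_singleton_eq_of_mem hz0 hz.1).symm.trans
    (span_singleton_eq_of_mem hz0 hz.2))

lemma proj_finrank_sup {A B : Submodule F S} (hA : IsProjPoint F A) (hB : IsProjPoint F B)
    (hne : A ≠ B) : Module.finrank F ↥(A ⊔ B) = 2 := by
  have := proj_fd hA
  have := proj_fd hB
  have h := Submodule.finrank_sup_add_finrank_inf_eq A B
  rw [proj_inf_eq_bot hA hB hne, proj_finrank hA, proj_finrank hB, finrank_bot] at h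
  omega

lemma finrank_sup_le' (A B : Submodule F S) [FiniteDimensional F A] [FiniteDimensional F B] :
    Module.finrank F ↥(A ⊔ B) ≤ Module.finrank F A + Module.finrank F B := by
  have h := Submodule.finrank_sup_add_finrank_inf_eq A B
  omega

lemma map_proj {x : S} {A : Submodule F S} (hA : IsProjPoint F A)
    (hne : A ≠ Submodule.span F {x}) :
    IsProjPoint F (Submodule.map (Submodule.span F {x}).mkQ A) := by
  obtain ⟨a, ha, rfl⟩ := hA
  refine ⟨(Submodule.span F {x}).mkQ a, ?_, ?_⟩
  · intro h0
    rw [Submodule.mkQ_apply, Submodule.Quotient.mk_eq_zero] at h0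
    exact hne (span_singleton_eq_of_mem ha h0)
  · rw [Submodule.map_span, Set.image_singleton]

end helpers

theorem statement12 {F : Type*} [Field F] {S : Type*} [AddCommGroup S] [Module F S]
    (𝒰 𝒱 : Set (Submodule F S))
    (h𝒰 : ∀ p ∈ 𝒰, IsProjPoint F p) (h𝒱 : ∀ p ∈ 𝒱, IsProjPoint F p)
    (hfac : IsFactorization F 𝒰 𝒱)
    (x : S) (hx : x ≠ 0)
    (hper : IsPeriodPoint F (Submodule.span F {x}) 𝒰) :
    IsFactorization F (projectSet F x 𝒰) (projectSet F x 𝒱) := by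
  obtain ⟨𝓛, h𝓛, h𝒰eq⟩ := hper
  have hdisj := hfac.1
  have hppt : IsProjPoint F (Submodule.span F {x}) := ⟨x, hx, rfl⟩
  have hmapp : Submodule.map (Submodule.span F {x}).mkQ (Submodule.span F {x}) = ⊥ := by
    rw [Submodule.map_span, Set.image_singleton]
    have : (Submodule.span F {x}).mkQ x = 0 := by
      rw [Submodule.mkQ_apply, Submodule.Quotient.mk_eq_zero]
      exact Submodule.mem_span_singleton_self x
    rw [this, Submodule.span_zero_singleton]
  -- any point of a line of 𝓛 belongs to 𝒰, in particular:
  have hline : ∀ u' ∈ 𝒰, ∀ A : Submodule F S, IsProjPoint F A →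
      A ≤ u' ⊔ Submodule.span F {x} → A ∈ 𝒰 := by
    intro u' hu' A hApt hAle
    have hu'' := h𝒰eq ▸ hu'
    obtain ⟨-, L, hL, hu'L⟩ := hu''
    have hpL := (h𝓛 L hL).2
    rw [h𝒰eq]
    exact ⟨hApt, L, hL, hAle.trans (sup_le hu'L hpL)⟩
  constructor
  · rw [Set.disjoint_left]
    rintro w ⟨u, ⟨hu𝒰, hup⟩, rfl⟩ ⟨v, ⟨hv𝒱, hvp⟩, hvw⟩
    have hv_le : v ≤ u ⊔ Submodule.span F {x} := by
      have h1 := Submodule.le_comap_map (Submodule.span F {x}).mkQ v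
      simp only at hvw
      rw [hvw] at h1
      rwa [Submodule.comap_map_eq, Submodule.ker_mkQ] at h1
    have hv𝒰 : v ∈ 𝒰 := hline u hu𝒰 v (h𝒱 v hv𝒱) hv_le
    exact absurd hv𝒱 (Set.disjoint_left.mp hdisj hv𝒰)
  · rintro Q ⟨w, hw0, rfl⟩ hQ𝒰 hQ𝒱
    obtain ⟨y, rfl⟩ := (Submodule.span F {x}).mkQ_surjective w
    have hy0 : y ≠ 0 := fun h => hw0 (by simp [h])
    have hyx : y ∉ Submodule.span F {x} := fun h =>
      hw0 (by rwa [Submodule.mkQ_apply, Submodule.Quotient.mk_eq_zero])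
    have hQpt : IsProjPoint F (Submodule.span F {(Submodule.span F {x}).mkQ y}) :=
      ⟨_, hw0, rfl⟩
    have hqpt : IsProjPoint F (Submodule.span F {y}) := ⟨y, hy0, rfl⟩
    have hqmap : Submodule.map (Submodule.span F {x}).mkQ (Submodule.span F {y}) =
        Submodule.span F {(Submodule.span F {x}).mkQ y} := by
      rw [Submodule.map_span, Set.image_singleton]
    have hqp : Submodule.span F {y} ≠ Submodule.span F {x} := fun h =>
      hyx (h ▸ Submodule.mem_span_singleton_self y)
    have hq𝒰 : Submodule.span F {y} ∉ 𝒰 := fun h => hQ𝒰 ⟨_, ⟨h, hqp⟩, hqmap⟩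
    have hq𝒱 : Submodule.span F {y} ∉ 𝒱 := fun h => hQ𝒱 ⟨_, ⟨h, hqp⟩, hqmap⟩
    obtain ⟨⟨u, v⟩, ⟨hu, hv, hle⟩, huniq⟩ := hfac.2 (Submodule.span F {y}) hqpt hq𝒰 hq𝒱
    -- if one of u, v equals the center p, the projected point would lie in 𝒰/p or 𝒱/p
    have key : ∀ u' v' : Submodule F S, u' ∈ 𝒰 → v' ∈ 𝒱 →
        Submodule.span F {y} ≤ u' ⊔ v' → u' ≠ Submodule.span F {x} := by
      intro u' v' hu' hv' hle' h
      have hv'p : v' ≠ Submodule.span F {x} := by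
        intro hv''
        rw [hv'', ← h] at hv'
        exact absurd hv' (Set.disjoint_left.mp hdisj hu')
      have h1 : Submodule.map (Submodule.span F {x}).mkQ (Submodule.span F {y}) ≤
          Submodule.map (Submodule.span F {x}).mkQ (u' ⊔ v') :=
        Submodule.map_mono hle'
      rw [Submodule.map_sup, h, hmapp, bot_sup_eq, hqmap] at h1
      exact hQ𝒱 ⟨v', ⟨hv', hv'p⟩,
        (proj_eq_of_le hQpt (map_proj (h𝒱 v' hv') hv'p) h1).symm⟩
    have hup : u ≠ Submodule.span F {x} := key u v hu hv hle
    have hvp : v ≠ Submodule.span F {x} := by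
      intro h
      have h1 : Submodule.map (Submodule.span F {x}).mkQ (Submodule.span F {y}) ≤
          Submodule.map (Submodule.span F {x}).mkQ (u ⊔ v) :=
        Submodule.map_mono hle
      rw [Submodule.map_sup, h, hmapp, sup_bot_eq, hqmap] at h1
      exact hQ𝒰 ⟨u, ⟨hu, hup⟩,
        (proj_eq_of_le hQpt (map_proj (h𝒰 u hu) hup) h1).symm⟩
    refine ⟨(Submodule.map (Submodule.span F {x}).mkQ u,
             Submodule.map (Submodule.span F {x}).mkQ v),
      ⟨⟨u, ⟨hu, hup⟩, rfl⟩, ⟨v, ⟨hv, hvp⟩, rfl⟩, ?_⟩, ?_⟩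
    · have h1 : Submodule.map (Submodule.span F {x}).mkQ (Submodule.span F {y}) ≤
          Submodule.map (Submodule.span F {x}).mkQ (u ⊔ v) :=
        Submodule.map_mono hle
      rwa [Submodule.map_sup, hqmap] at h1
    · rintro ⟨a, b⟩ ⟨⟨u', ⟨hu', hu'p⟩, rfl⟩, ⟨v', ⟨hv', hv'p⟩, rfl⟩, hab⟩
      have hu'pt := h𝒰 u' hu'
      have hv'pt := h𝒱 v' hv'
      haveI := proj_fd hqpt
      haveI := proj_fd hu'pt
      haveI := proj_fd hv'pt
      haveI := proj_fd hppt
      -- q lies in the plane W = u' ⊔ v' ⊔ p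
      have hqW : Submodule.span F {y} ≤ u' ⊔ v' ⊔ Submodule.span F {x} := by
        have h1 : Submodule.span F {y} ≤ Submodule.comap (Submodule.span F {x}).mkQ
            (Submodule.span F {(Submodule.span F {x}).mkQ y}) := by
          rw [← hqmap]; exact Submodule.le_comap_map _ _
        refine h1.trans ((Submodule.comap_mono hab).trans ?_)
        rw [← Submodule.map_sup, Submodule.comap_map_eq, Submodule.ker_mkQ]
      have hqv' : Submodule.span F {y} ≠ v' := fun h => hq𝒱 (h ▸ hv')
      -- the lines A = q ⊔ v' and B = u' ⊔ p meet in a point u''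
      have hfrA : Module.finrank F ↥(Submodule.span F {y} ⊔ v') = 2 :=
        proj_finrank_sup hqpt hv'pt hqv'
      have hfrB : Module.finrank F ↥(u' ⊔ Submodule.span F {x}) = 2 :=
        proj_finrank_sup hu'pt hppt hu'p
      have hABle : (Submodule.span F {y} ⊔ v') ⊔ (u' ⊔ Submodule.span F {x}) ≤
          u' ⊔ v' ⊔ Submodule.span F {x} := by
        refine sup_le (sup_le hqW ?_) (sup_le ?_ ?_)
        · exact le_sup_of_le_left le_sup_right
        · exact le_sup_of_le_left le_sup_left
        · exact le_sup_right
      have hfrW : Module.finrank F ↥(u' ⊔ v' ⊔ Submodule.span F {x}) ≤ 3 := by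
        have h1 := finrank_sup_le' (F := F) (u' ⊔ v') (Submodule.span F {x})
        have h2 := finrank_sup_le' (F := F) u' v'
        rw [proj_finrank hu'pt, proj_finrank hv'pt] at h2
        rw [proj_finrank hppt] at h1
        omega
      have hfrAB : Module.finrank F
          ↥((Submodule.span F {y} ⊔ v') ⊔ (u' ⊔ Submodule.span F {x})) ≤ 3 :=
        le_trans (Submodule.finrank_mono hABle) hfrW
      have hint := Submodule.finrank_sup_add_finrank_inf_eq
        (Submodule.span F {y} ⊔ v') (u' ⊔ Submodule.span F {x})
      rw [hfrA, hfrB] at hint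
      have hne : (Submodule.span F {y} ⊔ v') ⊓ (u' ⊔ Submodule.span F {x}) ≠ ⊥ := by
        intro h
        rw [h, finrank_bot] at hint
        omega
      obtain ⟨z, hzmem, hz0⟩ := (Submodule.ne_bot_iff _).mp hne
      have hu''pt : IsProjPoint F (Submodule.span F {z}) := ⟨z, hz0, rfl⟩
      have hu''𝒰 : Submodule.span F {z} ∈ 𝒰 := by
        refine hline u' hu' _ hu''pt ?_
        rw [Submodule.span_le, Set.singleton_subset_iff]
        exact hzmem.2
      have hu''v' : Submodule.span F {z} ≠ v' := fun h =>
        absurd hv' (Set.disjoint_left.mp hdisj (h ▸ hu''𝒰))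
      have hA_eq : Submodule.span F {z} ⊔ v' = Submodule.span F {y} ⊔ v' := by
        haveI : FiniteDimensional F ↥(Submodule.span F {y} ⊔ v') := inferInstance
        refine Submodule.eq_of_le_of_finrank_le ?_ ?_
        · refine sup_le ?_ le_sup_right
          rw [Submodule.span_le, Set.singleton_subset_iff]
          exact hzmem.1
        · rw [hfrA, proj_finrank_sup hu''pt hv'pt hu''v']
      have hqle : Submodule.span F {y} ≤ Submodule.span F {z} ⊔ v' := by
        rw [hA_eq]; exact le_sup_left
      have heq := huniq (Submodule.span F {z}, v') ⟨hu''𝒰, hv', hqle⟩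
      have hzu : Submodule.span F {z} = u := congrArg Prod.fst heq
      have hv'v : v' = v := congrArg Prod.snd heq
      -- conclude: the projections agree
      have hmapu : Submodule.map (Submodule.span F {x}).mkQ u' =
          Submodule.map (Submodule.span F {x}).mkQ u := by
        have h1 : Submodule.map (Submodule.span F {x}).mkQ (Submodule.span F {z}) ≤
            Submodule.map (Submodule.span F {x}).mkQ (u' ⊔ Submodule.span F {x}) := by
          refine Submodule.map_mono ?_
          rw [Submodule.span_le, Set.singleton_subset_iff]
          exact hzmem.2
        rw [Submodule.map_sup, hmapp, sup_bot_eq] at h1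
        rw [hzu] at h1
        have hupt : IsProjPoint F u := hzu ▸ hu''pt
        have hu'ne : u' ≠ Submodule.span F {x} := hu'p
        exact (proj_eq_of_le (map_proj hupt hup) (map_proj hu'pt hu'ne) h1).symm
      rw [Prod.mk.injEq]
      exact ⟨hmapu, by rw [hv'v]⟩
end

section
/- Let F be a field and m ≥ 1 an integer. In F^{2m} with standard basis x_1, …, x_m, y_1, …, y_m, let H = span{x_1, …, x_m}, and for each i ∈ {1, …, m} let V_i = (span{y_i} \ {y_i}) ∪ {y_i + x_i}. Let V = V_1 + ⋯ + V_m be the setwise sum. Then (H, V) is a tiling of F^{2m}. -/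
open Pointwise
open scoped Classical

/-- The standard basis vector `x_i` of `F^{2m} = F^m × F^m` (first block). -/
def xB (F : Type*) [Field F] (m : ℕ) (i : Fin m) : (Fin m → F) × (Fin m → F) :=
  (Pi.single i 1, 0)

/-- The standard basis vector `y_i` of `F^{2m} = F^m × F^m` (second block). -/
def yB (F : Type*) [Field F] (m : ℕ) (i : Fin m) : (Fin m → F) × (Fin m → F) :=
  (0, Pi.single i 1)

/-- The tile `V_i = (span{y_i} \ {y_i}) ∪ {y_i + x_i}`. -/
def tileV (F : Type*) [Field F] (m : ℕ) (i : Fin m) :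
    Set ((Fin m → F) × (Fin m → F)) :=
  ((Submodule.span F {yB F m i} : Set ((Fin m → F) × (Fin m → F))) \ {yB F m i}) ∪
    {yB F m i + xB F m i}

noncomputable def indV {F : Type*} [Field F] {m : ℕ} (c : Fin m → F) : Fin m → F :=
  fun j => if c j = 1 then 1 else 0

lemma mem_tileV_iff {F : Type*} [Field F] {m : ℕ} (i : Fin m)
    (p : (Fin m → F) × (Fin m → F)) :
    p ∈ tileV F m i ↔ ∃ c : F,
      p = ((if c = 1 then Pi.single i 1 else 0), Pi.single i c) := by
  have hsingle : ∀ c : F, c • (Pi.single i 1 : Fin m → F) = Pi.single i c := by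
    intro c
    rw [← Pi.single_smul, smul_eq_mul, mul_one]
  constructor
  · rintro (⟨hsp, hne⟩ | h)
    · rw [SetLike.mem_coe, Submodule.mem_span_singleton] at hsp
      obtain ⟨c, rfl⟩ := hsp
      refine ⟨c, ?_⟩
      have hc : c ≠ 1 := by
        rintro rfl
        exact hne (by simp [yB])
      simp [yB, Prod.smul_mk, hsingle, hc]
    · refine ⟨1, ?_⟩
      simp only [Set.mem_singleton_iff] at h
      simp [h, yB, xB, Prod.ext_iff]
  · rintro ⟨c, rfl⟩
    by_cases hc : c = 1
    · right
      simp [hc, yB, xB, Prod.ext_iff]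
    · left
      constructor
      · rw [SetLike.mem_coe, Submodule.mem_span_singleton]
        exact ⟨c, by simp [yB, Prod.smul_mk, hsingle, hc]⟩
      · simp only [Set.mem_singleton_iff, yB, Prod.ext_iff, hc, if_neg hc]
        intro ⟨_, h2⟩
        apply hc
        have := congrFun h2 i
        simpa using this

lemma mem_H_iff {F : Type*} [Field F] {m : ℕ} (p : (Fin m → F) × (Fin m → F)) :
    p ∈ Submodule.span F (Set.range (xB F m)) ↔ p.2 = 0 := by
  constructor
  · intro hp
    have hle : Submodule.span F (Set.range (xB F m)) ≤
        LinearMap.ker (LinearMap.snd F (Fin m → F) (Fin m → F)) := by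
      rw [Submodule.span_le]
      rintro _ ⟨i, rfl⟩
      simp [xB]
    exact hle hp
  · intro hp
    have hrep : p = ∑ i : Fin m, p.1 i • xB F m i := by
      have : ∑ i : Fin m, p.1 i • xB F m i
          = (∑ i : Fin m, Pi.single i (p.1 i), 0) := by
        rw [Prod.ext_iff]
        constructor
        · rw [Prod.fst_sum]
          refine Finset.sum_congr rfl fun i _ => ?_
          simp only [xB, Prod.smul_mk]
          rw [← Pi.single_smul, smul_eq_mul, mul_one]
        · simp [Prod.snd_sum, xB]
      rw [this, Finset.univ_sum_single]
      exact Prod.ext rfl hp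
    rw [hrep]
    exact Submodule.sum_mem _ fun i _ =>
      Submodule.smul_mem _ _ (Submodule.subset_span ⟨i, rfl⟩)

lemma mem_V_iff {F : Type*} [Field F] {m : ℕ} (p : (Fin m → F) × (Fin m → F)) :
    p ∈ ∑ i : Fin m, tileV F m i ↔ ∃ c : Fin m → F, p = (indV c, c) := by
  rw [Set.mem_fintype_sum]
  constructor
  · rintro ⟨g, hg, rfl⟩
    choose c hc using fun i => (mem_tileV_iff i (g i)).1 (hg i)
    refine ⟨c, ?_⟩
    have h1 : ∀ i, g i = (Pi.single i (indV c i), Pi.single i (c i)) := by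
      intro i
      rw [hc i]
      by_cases h : c i = 1 <;> simp [indV, h]
    rw [Prod.ext_iff, Prod.fst_sum, Prod.snd_sum]
    constructor
    · rw [Finset.sum_congr rfl fun i _ => congrArg Prod.fst (h1 i)]
      exact Finset.univ_sum_single _
    · rw [Finset.sum_congr rfl fun i _ => congrArg Prod.snd (h1 i)]
      exact Finset.univ_sum_single _
  · rintro ⟨c, rfl⟩
    refine ⟨fun i => ((if c i = 1 then Pi.single i 1 else 0), Pi.single i (c i)),
      fun i => (mem_tileV_iff i _).2 ⟨c i, rfl⟩, ?_⟩
    have h1 : ∀ i : Fin m,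
        (((if c i = 1 then Pi.single i 1 else 0), Pi.single i (c i)) :
            (Fin m → F) × (Fin m → F))
          = (Pi.single i (indV c i), Pi.single i (c i)) := by
      intro i
      by_cases h : c i = 1 <;> simp [indV, h]
    rw [Finset.sum_congr rfl fun i _ => h1 i, Prod.ext_iff, Prod.fst_sum, Prod.snd_sum]
    exact ⟨Finset.univ_sum_single _, Finset.univ_sum_single _⟩

theorem statement13 {F : Type*} [Field F] (m : ℕ) (hm : 1 ≤ m) :
    IsTiling ((Submodule.span F (Set.range (xB F m)) :
        Set ((Fin m → F) × (Fin m → F))))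
      (∑ i : Fin m, tileV F m i) := by
  intro s
  refine ⟨((s.1 - indV s.2, 0), (indV s.2, s.2)), ⟨?_, ?_, ?_⟩, ?_⟩
  · exact (mem_H_iff _).2 rfl
  · exact (mem_V_iff _).2 ⟨s.2, rfl⟩
  · simp [Prod.ext_iff]
  · rintro ⟨h, v⟩ ⟨hH, hV, hsum⟩
    have h2 : h.2 = 0 := (mem_H_iff h).1 hH
    obtain ⟨c, rfl⟩ := (mem_V_iff v).1 hV
    have hc : c = s.2 := by
      have := congrArg Prod.snd hsum
      simpa [h2] using this
    subst hc
    have h1 : h.1 = s.1 - indV s.2 := by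
      have := congrArg Prod.fst hsum
      simp only [Prod.fst_add] at this
      exact eq_sub_of_add_eq this
    exact Prod.ext (Prod.ext h1 h2) rfl
end

section
/- Let F be a field and m ≥ 1 an integer. In F^{2m} with standard basis x_1, …, x_m, y_1, …, y_m, let V_i = (span{y_i} \ {y_i}) ∪ {y_i + x_i} for i ∈ {1, …, m}, and let V = V_1 + ⋯ + V_m (setwise sum). If L is a subset of F^{2m} having x_i as a period (L + x_i = L) for some i ∈ {1, …, m}, then L + V = (L + γ y_i) + V for every γ ∈ F, where L + γ y_i denotes the translate {l + γ y_i : l ∈ L}. -/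
open Pointwise

/-- The set of periods of `X`: vectors `w` with `X + w = X`. -/
def periods {S : Type*} [AddCommGroup S] (X : Set S) : Set S :=
  {w | (fun v => v + w) '' X = X}

lemma singleton_add_span_eq {F M : Type*} [Field F] [AddCommGroup M] [Module F M]
    (p : Submodule F M) (a : M) (ha : a ∈ p) : {a} + (p : Set M) = (p : Set M) := by
  ext x
  constructor
  · rintro ⟨u, hu, z, hz, rfl⟩
    rcases hu with rfl
    exact p.add_mem ha hz
  · intro hx
    exact ⟨a, rfl, x - a, p.sub_mem hx ha, add_sub_cancel a x⟩

lemma add_tile_of_period {F : Type*} [Field F] {m : ℕ} (i : Fin m)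
    (K : Set ((Fin m → F) × (Fin m → F))) (hK : xB F m i ∈ periods K) :
    K + tileV F m i = K + (Submodule.span F {yB F m i} : Set _) := by
  have hKx : K + {xB F m i} = K := by
    rw [Set.add_singleton]; exact hK
  have h1 : K + {yB F m i + xB F m i} = K + {yB F m i} := by
    have : ({yB F m i + xB F m i} : Set _) = {xB F m i} + {yB F m i} := by
      rw [Set.singleton_add_singleton, add_comm]
    rw [this, ← add_assoc, hKx]
  have h2 : ((Submodule.span F {yB F m i} : Set ((Fin m → F) × (Fin m → F))) \ {yB F m i})
      ∪ {yB F m i} = (Submodule.span F {yB F m i} : Set _) := by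
    apply Set.diff_union_of_subset
    simpa using Submodule.mem_span_singleton_self (yB F m i)
  calc K + tileV F m i
      = (K + ((Submodule.span F {yB F m i} : Set _) \ {yB F m i})) ∪ (K + {yB F m i}) := by
        rw [tileV, Set.add_union, h1]
    _ = K + (Submodule.span F {yB F m i} : Set _) := by rw [← Set.add_union, h2]

theorem statement14 {F : Type*} [Field F] (m : ℕ) (hm : 1 ≤ m) (i : Fin m)
    (L : Set ((Fin m → F) × (Fin m → F))) (hL : xB F m i ∈ periods L) (γ : F) :
    L + ∑ j : Fin m, tileV F m j =
      ((fun l => l + γ • yB F m i) '' L) + ∑ j : Fin m, tileV F m j := by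
  set L' := (fun l => l + γ • yB F m i) '' L with hL'
  have hL'per : xB F m i ∈ periods L' := by
    have : (fun v => v + xB F m i) '' L' = (fun l => l + γ • yB F m i) '' ((fun v => v + xB F m i) '' L) := by
      rw [← Set.image_comp, ← Set.image_comp]
      apply Set.image_congr'
      intro v; simp; abel
    rw [periods, Set.mem_setOf_eq, this, hL]
  have key : L + tileV F m i = L' + tileV F m i := by
    rw [add_tile_of_period i L hL, add_tile_of_period i L' hL'per]
    have : L' = L + {γ • yB F m i} := by rw [Set.add_singleton]
    rw [this, add_assoc, singleton_add_span_eq]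
    exact Submodule.smul_mem _ γ (Submodule.mem_span_singleton_self _)
  rw [← Finset.add_sum_erase _ _ (Finset.mem_univ i), ← add_assoc, ← add_assoc, key]
end

section
/- Let F be a field with |F| > 2 and m ≥ 3 an integer. In F^{2m} with standard basis x_1, …, x_m, y_1, …, y_m, let V_i = (span{y_i} \ {y_i}) ∪ {y_i + x_i} for i ∈ {1, …, m}, and let V = V_1 + ⋯ + V_m (setwise sum). Then V is full-rank (the affine span of V equals F^{2m}) and V is aperiodic (per(V) = {0}). -/
open Pointwise

lemma mem_tileV {F : Type*} [Field F] {m : ℕ} {i : Fin m}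
    {u : (Fin m → F) × (Fin m → F)} :
    u ∈ tileV F m i ↔ (∃ c : F, c ≠ 1 ∧ u = c • yB F m i) ∨ u = yB F m i + xB F m i := by
  have hy0 : yB F m i ≠ 0 := by
    intro h
    have := congrArg (fun p => p.2 i) h
    simp [yB] at this
  constructor
  · rintro (⟨hs, hne⟩ | h)
    · rw [SetLike.mem_coe, Submodule.mem_span_singleton] at hs
      obtain ⟨c, rfl⟩ := hs
      refine Or.inl ⟨c, ?_, rfl⟩
      rintro rfl
      simp at hne
    · exact Or.inr h
  · rintro (⟨c, hc, rfl⟩ | rfl)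
    · refine Or.inl ⟨?_, ?_⟩
      · rw [SetLike.mem_coe, Submodule.mem_span_singleton]
        exact ⟨c, rfl⟩
      · simp only [Set.mem_singleton_iff]
        intro h
        apply hc
        have := sub_eq_zero.2 h
        nth_rewrite 2 [← one_smul F (yB F m i)] at this
        rw [← sub_smul] at this
        · rcases smul_eq_zero.1 this with h' | h'
          · exact sub_eq_zero.1 h'
          · exact absurd h' hy0
    · exact Or.inr rfl

/-- coordinate description of tile members -/
lemma tileV_coords {F : Type*} [Field F] {m : ℕ} {i : Fin m}
    {u : (Fin m → F) × (Fin m → F)} (hu : u ∈ tileV F m i) :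
    (∀ k, k ≠ i → u.1 k = 0 ∧ u.2 k = 0) ∧
      ((u.1 i = 0 ∧ u.2 i ≠ 1) ∨ (u.1 i = 1 ∧ u.2 i = 1)) := by
  rcases mem_tileV.1 hu with ⟨c, hc, rfl⟩ | rfl
  · constructor
    · intro k hk
      simp [yB, Pi.single_apply, hk]
    · left
      simp [yB, Pi.single_apply, hc]
  · constructor
    · intro k hk
      simp [yB, xB, Pi.single_apply, hk]
    · right
      simp [yB, xB, Pi.single_apply]

def coordOK {F : Type*} [Field F] (a b : F) : Prop :=
  (a = 0 ∧ b ≠ 1) ∨ (a = 1 ∧ b = 1)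

lemma mem_V {F : Type*} [Field F] {m : ℕ} {v : (Fin m → F) × (Fin m → F)} :
    v ∈ ∑ i : Fin m, tileV F m i ↔ ∀ i, coordOK (v.1 i) (v.2 i) := by
  rw [Set.mem_fintype_sum]
  constructor
  · rintro ⟨g, hg, rfl⟩ i
    have h1 : (∑ j, g j).1 i = (g i).1 i := by
      rw [Prod.fst_sum, Finset.sum_apply]
      refine Finset.sum_eq_single i (fun j _ hj => ((tileV_coords (hg j)).1 i
        (by exact fun h => hj (h ▸ rfl))).1) (by simp)
    have h2 : (∑ j, g j).2 i = (g i).2 i := by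
      rw [Prod.snd_sum, Finset.sum_apply]
      refine Finset.sum_eq_single i (fun j _ hj => ((tileV_coords (hg j)).1 i
        (by exact fun h => hj (h ▸ rfl))).2) (by simp)
    rw [h1, h2]
    exact (tileV_coords (hg i)).2
  · intro h
    refine ⟨fun i => (Pi.single i (v.1 i), Pi.single i (v.2 i)), fun i => ?_, ?_⟩
    · rcases h i with ⟨h1, h2⟩ | ⟨h1, h2⟩
      · refine mem_tileV.2 (Or.inl ⟨v.2 i, h2, ?_⟩)
        ext k <;> simp [yB, h1, Pi.single_apply, mul_comm]
      · refine mem_tileV.2 (Or.inr ?_)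
        ext k <;> simp [yB, xB, h1, h2]
    · ext k
      · simp [Prod.fst_sum, Finset.sum_apply, Pi.single_apply]
      · simp [Prod.snd_sum, Finset.sum_apply, Pi.single_apply]

theorem statement15 {F : Type*} [Field F] (hF : ∃ a : F, a ≠ 0 ∧ a ≠ 1)
    (m : ℕ) (hm : 3 ≤ m) :
    affineSpan F (∑ i : Fin m, tileV F m i) = ⊤ ∧
      periods (∑ i : Fin m, tileV F m i) = {0} := by
  obtain ⟨a, ha0, ha1⟩ := hF
  set V := ∑ i : Fin m, tileV F m i with hV
  have h0 : (0 : (Fin m → F) × (Fin m → F)) ∈ V := by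
    rw [hV, mem_V]
    intro i
    exact Or.inl ⟨rfl, by simp⟩
  have hyV : ∀ i, a • yB F m i ∈ V := by
    intro i
    rw [hV, mem_V]
    intro j
    by_cases hj : j = i
    · subst hj
      left
      constructor
      · simp [yB]
      · simp [yB, Pi.single_apply, ha1]
    · left
      constructor
      · simp [yB]
      · simp [yB, Pi.single_apply, hj]
  have hxyV : ∀ i, yB F m i + xB F m i ∈ V := by
    intro i
    rw [hV, mem_V]
    intro j
    by_cases hj : j = i
    · subst hj; right; simp [yB, xB]
    · left
      constructor
      · simp [yB, xB, Pi.single_apply, hj]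
      · simp [yB, xB, Pi.single_apply, hj]
  constructor
  · -- full rank
    have hdir : vectorSpan F V = ⊤ := by
      rw [eq_top_iff]
      intro w _
      have hy : ∀ i, yB F m i ∈ vectorSpan F V := by
        intro i
        have h1 : a • yB F m i - 0 ∈ vectorSpan F V := vsub_mem_vectorSpan F (hyV i) h0
        rw [sub_zero] at h1
        have := Submodule.smul_mem _ a⁻¹ h1
        rwa [smul_smul, inv_mul_cancel₀ ha0, one_smul] at this
      have hx : ∀ i, xB F m i ∈ vectorSpan F V := by
        intro i
        have h1 : yB F m i + xB F m i - 0 ∈ vectorSpan F V := vsub_mem_vectorSpan F (hxyV i) h0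
        rw [sub_zero] at h1
        have := Submodule.sub_mem _ h1 (hy i)
        rwa [add_sub_cancel_left] at this
      have : w = ∑ i, (w.1 i • xB F m i + w.2 i • yB F m i) := by
        ext k
        · simp [Prod.fst_sum, Finset.sum_apply, xB, yB, Pi.single_apply]
        · simp [Prod.snd_sum, Finset.sum_apply, xB, yB, Pi.single_apply]
      rw [this]
      exact Submodule.sum_mem _ fun i _ =>
        Submodule.add_mem _ (Submodule.smul_mem _ _ (hx i)) (Submodule.smul_mem _ _ (hy i))
    have hne : (affineSpan F V : Set ((Fin m → F) × (Fin m → F))).Nonempty := ⟨0, subset_affineSpan F V h0⟩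
    rw [← AffineSubspace.direction_eq_top_iff_of_nonempty hne, direction_affineSpan]
    exact hdir
  · -- aperiodicity
    ext w
    simp only [Set.mem_singleton_iff, periods, Set.mem_setOf_eq]
    constructor
    · intro hw
      have hsub : ∀ v ∈ V, v + w ∈ V := by
        intro v hv
        rw [← hw]
        exact ⟨v, hv, rfl⟩
      have hwV : ∀ i, coordOK (w.1 i) (w.2 i) := by
        have := hsub 0 h0
        rw [zero_add] at this
        exact mem_V.1 this
      have hw1 : ∀ i, w.1 i = 0 ∧ w.2 i ≠ 1 := by
        intro i
        rcases hwV i with h | ⟨h1, h2⟩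
        · exact h
        · exfalso
          have := mem_V.1 (hsub _ (hyV i)) i
          rcases this with ⟨c1, _⟩ | ⟨_, c2⟩
          · rw [Prod.fst_add, Pi.add_apply, h1] at c1
            simp [yB] at c1
          · rw [Prod.snd_add, Pi.add_apply, h2] at c2
            simp [yB, Pi.single_apply] at c2
            exact ha0 c2
      have hw2 : ∀ i, w.2 i = 0 := by
        intro i
        have := mem_V.1 (hsub _ (hxyV i)) i
        rcases this with ⟨c1, _⟩ | ⟨_, c2⟩
        · exfalso
          rw [Prod.fst_add, Pi.add_apply, (hw1 i).1] at c1
          simp [yB, xB] at c1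
        · rw [Prod.snd_add, Pi.add_apply] at c2
          simpa [yB, xB] using c2
      ext k
      · exact (hw1 k).1
      · exact hw2 k
    · rintro rfl
      simp
end
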